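/- arXiv:2105.06073 — 3 statements merged into one kernel-verified Lean document; each statement's English description precedes it below -/
import Mathlib

section
/- Suppose φ^ν : ℝⁿ → ℝ ∪ {±∞} epi-converge to a proper function φ, meaning: (a) for every x and every x^ν → x, liminf φ^ν(x^ν) ≥ φ(x), and (b) for every x there exist x^ν → x with limsup φ^ν(x^ν) ≤ φ(x). If x^ν is a sequence with φ^ν(x^ν) ≤ inf φ^ν + ε^ν where ε^ν → 0, inf φ^ν > -∞ for all ν, and x^ν converges to a point x̄ along a subsequence, then x̄ is a minimizer of φ, i.e., φ(x̄) ≤ φ(x) for all x. -/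
open Filter Topology

theorem Function.Injective.tendsto_extend_cofinite {ι α X : Type*} [TopologicalSpace X]
    {σ : ι → α} (hσ : σ.Injective) {u : ι → X} {a : X} (hu : Tendsto u cofinite (𝓝 a)) :
    Tendsto (σ.extend u fun _ => a) cofinite (𝓝 a) := by
  intro U hU
  refine ((hu hU).image σ).subset fun ν hν => ?_
  by_cases hν_range : ∃ k, σ k = ν
  · obtain ⟨k, rfl⟩ := hν_range
    exact ⟨k, by simpa [hσ.extend_apply] using hν, rfl⟩
  · exact absurd (by simpa [Function.extend_apply' _ _ _ hν_range] using mem_of_mem_nhds hU) hν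

-- Extend the subsequence by the limit point off the range of `σ` to get a convergent sequence.
theorem le_liminf_comp_of_forall_le_liminf {X β : Type*} [TopologicalSpace X] [CompleteLattice β]
    {f : ℕ → X → β} {g : X → β}
    (hlim : ∀ (x : X) (xs : ℕ → X), Tendsto xs atTop (𝓝 x) →
      g x ≤ liminf (fun ν => f ν (xs ν)) atTop)
    {σ : ℕ → ℕ} (hσ : StrictMono σ) {xs : ℕ → X} {a : X}
    (hxs : Tendsto (fun k => xs (σ k)) atTop (𝓝 a)) :
    g a ≤ liminf (fun k => f (σ k) (xs (σ k))) atTop := by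
  set ys := σ.extend (fun k => xs (σ k)) fun _ => a
  have hys : Tendsto ys atTop (𝓝 a) := by
    rw [← Nat.cofinite_eq_atTop] at hxs ⊢
    exact hσ.injective.tendsto_extend_cofinite hxs
  calc g a ≤ liminf (fun ν => f ν (ys ν)) atTop := hlim a ys hys
    _ ≤ liminf ((fun ν => f ν (ys ν)) ∘ σ) atTop := hσ.tendsto_atTop.liminf_le_liminf_comp
    _ = liminf (fun k => f (σ k) (xs (σ k))) atTop := by
      simp [ys, Function.comp_def, hσ.injective.extend_apply]

theorem EReal.liminf_le_limsup_of_le_add_of_tendsto_zero {ι : Type*} {l : Filter ι} [l.NeBot]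
    {u v : ι → EReal} {ε : ι → ℝ} (hε : Tendsto ε l (𝓝 0))
    (huv : ∀ᶠ i in l, u i ≤ v i + ε i) :
    liminf u l ≤ limsup v l := by
  have hε_liminf : liminf (fun i => (ε i : EReal)) l = 0 :=
    (EReal.tendsto_coe.2 hε).liminf_eq
  calc liminf u l ≤ liminf (v + fun i => (ε i : EReal)) l := liminf_le_liminf huv
    _ ≤ limsup v l + liminf (fun i => (ε i : EReal)) l :=
      EReal.liminf_add_le (by simp [hε_liminf]) (by simp [hε_liminf])
    _ = limsup v l := by rw [hε_liminf, add_zero]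

theorem stmt_4_general {n : ℕ} (φν : ℕ → (Fin n → ℝ) → EReal) (φ : (Fin n → ℝ) → EReal)
    (hliminf : ∀ (x : Fin n → ℝ) (xs : ℕ → Fin n → ℝ), Tendsto xs atTop (𝓝 x) →
      φ x ≤ liminf (fun ν => φν ν (xs ν)) atTop)
    (hlimsup : ∀ x : Fin n → ℝ, ∃ xs : ℕ → Fin n → ℝ, Tendsto xs atTop (𝓝 x) ∧
      limsup (fun ν => φν ν (xs ν)) atTop ≤ φ x)
    (xν : ℕ → Fin n → ℝ) (εν : ℕ → ℝ) (hε : Tendsto εν atTop (𝓝 0))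
    (hnear : ∀ ν, φν ν (xν ν) ≤ (⨅ x, φν ν x) + ((εν ν : ℝ) : EReal))
    (xbar : Fin n → ℝ) (σ : ℕ → ℕ) (hσ : StrictMono σ)
    (hcluster : Tendsto (fun k => xν (σ k)) atTop (𝓝 xbar)) :
    ∀ x, φ xbar ≤ φ x := by
  intro x
  obtain ⟨xs, -, hrecovery⟩ := hlimsup x
  have hnear_xs : ∀ k, φν (σ k) (xν (σ k)) ≤ φν (σ k) (xs (σ k)) + εν (σ k) := fun k =>
    (hnear (σ k)).trans (add_le_add_left (iInf_le _ _) _)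
  calc φ xbar ≤ liminf (fun k => φν (σ k) (xν (σ k))) atTop :=
        le_liminf_comp_of_forall_le_liminf hliminf hσ hcluster
    _ ≤ limsup (fun k => φν (σ k) (xs (σ k))) atTop :=
        EReal.liminf_le_limsup_of_le_add_of_tendsto_zero (hε.comp hσ.tendsto_atTop)
          (Eventually.of_forall hnear_xs)
    _ ≤ limsup (fun ν => φν ν (xs ν)) atTop :=
        hσ.tendsto_atTop.limsup_comp_le_limsup (u := fun ν => φν ν (xs ν))
    _ ≤ φ x := hrecovery

theorem stmt_4 {n : ℕ} (φν : ℕ → (Fin n → ℝ) → EReal) (φ : (Fin n → ℝ) → EReal)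
    (hproper : (∀ x, φ x ≠ ⊥) ∧ ∃ x, φ x ≠ ⊤)
    (hliminf : ∀ (x : Fin n → ℝ) (xs : ℕ → Fin n → ℝ), Tendsto xs atTop (𝓝 x) →
      φ x ≤ liminf (fun ν => φν ν (xs ν)) atTop)
    (hlimsup : ∀ x : Fin n → ℝ, ∃ xs : ℕ → Fin n → ℝ, Tendsto xs atTop (𝓝 x) ∧
      limsup (fun ν => φν ν (xs ν)) atTop ≤ φ x)
    (xν : ℕ → Fin n → ℝ) (εν : ℕ → ℝ) (hε : Tendsto εν atTop (𝓝 0))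
    (hbdd : ∀ ν, (⨅ x, φν ν x) ≠ ⊥)
    (hnear : ∀ ν, φν ν (xν ν) ≤ (⨅ x, φν ν x) + ((εν ν : ℝ) : EReal))
    (xbar : Fin n → ℝ) (σ : ℕ → ℕ) (hσ : StrictMono σ)
    (hcluster : Tendsto (fun k => xν (σ k)) atTop (𝓝 xbar)) :
    ∀ x, φ xbar ≤ φ x :=
  stmt_4_general φν φ hliminf hlimsup xν εν hε hnear xbar σ hσ hcluster
end

section
/- Suppose φ^ν : ℝⁿ → ℝ ∪ {±∞} epi-converge to a proper function φ, and there is a compact set B ⊂ ℝⁿ such that B ∩ argmin φ^ν is nonempty for every ν. Then inf φ^ν → inf φ. -/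
open Filter Topology

theorem stmt_6 {n : ℕ} (φν : ℕ → (Fin n → ℝ) → EReal) (φ : (Fin n → ℝ) → EReal)
    (hproper : (∀ x, φ x ≠ ⊥) ∧ ∃ x, φ x ≠ ⊤)
    (hliminf : ∀ (x : Fin n → ℝ) (xs : ℕ → Fin n → ℝ), Tendsto xs atTop (𝓝 x) →
      φ x ≤ liminf (fun ν => φν ν (xs ν)) atTop)
    (hlimsup : ∀ x : Fin n → ℝ, ∃ xs : ℕ → Fin n → ℝ, Tendsto xs atTop (𝓝 x) ∧
      limsup (fun ν => φν ν (xs ν)) atTop ≤ φ x)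
    (B : Set (Fin n → ℝ)) (hB : IsCompact B)
    (hargmin : ∀ ν, ∃ x ∈ B, φν ν x ≤ (⨅ y, φν ν y) ∧ φν ν x ≠ ⊤) :
    Tendsto (fun ν => ⨅ x, φν ν x) atTop (𝓝 (⨅ x, φ x)) := by
  classical
  set g : ℕ → EReal := fun ν => ⨅ x, φν ν x with hg
  have hlimsup_le : limsup g atTop ≤ ⨅ x, φ x := by
    refine le_iInf fun x => ?_
    obtain ⟨xs, hxs, hls⟩ := hlimsup x
    refine le_trans (limsup_le_limsup ?_) hls
    exact Eventually.of_forall fun ν => iInf_le _ _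
  have hle_liminf : (⨅ x, φ x) ≤ liminf g atTop := by
    by_contra hcon
    push_neg at hcon
    obtain ⟨c, hc1, hc2⟩ := exists_between hcon
    have hfreq : ∃ᶠ ν in atTop, g ν < c := by
      by_contra hf
      have hev : ∀ᶠ ν in atTop, c ≤ g ν := by
        filter_upwards [not_frequently.mp hf] with ν hν
        exact not_lt.mp hν
      exact absurd (le_liminf_of_le (by isBoundedDefault) hev) (not_le.mpr hc1)
    obtain ⟨ns, hns, hlt⟩ := Filter.extraction_of_frequently_atTop hfreq
    choose xm hxmB hxmle _hxmt using hargmin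
    obtain ⟨xb, hxbB, σ, hσ, htend⟩ := hB.tendsto_subseq (fun k => hxmB (ns k))
    set m : ℕ → ℕ := fun k => ns (σ k) with hm_def
    have hm : StrictMono m := hns.comp hσ
    set ys : ℕ → Fin n → ℝ := fun ν => if ν ∈ Set.range m then xm ν else xb with hys_def
    have hys : Tendsto ys atTop (𝓝 xb) := by
      rw [tendsto_atTop'] at htend ⊢
      intro U hU
      obtain ⟨N, hN⟩ := htend U hU
      refine ⟨m N, fun ν hν => ?_⟩
      by_cases hmem : ν ∈ Set.range m
      · obtain ⟨k, rfl⟩ := hmem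
        have hNk : N ≤ k := by
          by_contra hk
          push_neg at hk
          exact absurd (hm hk) (not_lt.mpr hν)
        have : ys (m k) = xm (m k) := by
          simp [hys_def, Set.mem_range_self]
        rw [this]
        exact hN k hNk
      · have : ys ν = xb := if_neg hmem
        rw [this]
        exact mem_of_mem_nhds hU
    have h1 : φ xb ≤ liminf (fun ν => φν ν (ys ν)) atTop := hliminf xb ys hys
    have h2 : liminf (fun ν => φν ν (ys ν)) atTop
        ≤ liminf (fun k => φν (m k) (ys (m k))) atTop := by
      have hmap : map m atTop ≤ atTop := hm.tendsto_atTop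
      have h := liminf_le_liminf_of_le (u := fun ν => φν ν (ys ν)) hmap
      rwa [← liminf_comp] at h
    have h3 : liminf (fun k => φν (m k) (ys (m k))) atTop ≤ c := by
      refine liminf_le_of_frequently_le' (Frequently.of_forall fun k => ?_)
      have hysk : ys (m k) = xm (m k) := by simp [hys_def, Set.mem_range_self]
      rw [hysk]
      exact le_of_lt (lt_of_le_of_lt (hxmle (m k)) (hlt (σ k)))
    have : (⨅ x, φ x) ≤ c := le_trans (iInf_le _ xb) (h1.trans (h2.trans h3))
    exact absurd this (not_le.mpr hc2)
  have hls : liminf g atTop ≤ limsup g atTop := liminf_le_limsup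
  exact tendsto_of_liminf_eq_limsup
    (le_antisymm (hls.trans hlimsup_le) hle_liminf)
    (le_antisymm hlimsup_le (hle_liminf.trans hls))
end

section
/- Let X ⊂ ℝⁿ be nonempty and closed, f₀ : ℝⁿ → ℝ and f₁,…,f_m : ℝⁿ → ℝ continuous. Define φ(x) = ι_X(x) + f₀(x) + ι_{(-∞,0]^m}(f₁(x),…,f_m(x)) and f(u,x) = ι_X(x) + f₀(x) + θ(u) Σᵢ max{0, fᵢ(x) + uᵢ}. Suppose u^ν → 0, θ(u^ν) → ∞, and θ(u^ν)·max{0, maxᵢ uᵢ^ν} → 0. Then f(u^ν,·) epi-converges to φ. -/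
open Filter Topology
open scoped Classical

/-!
Write the penalized objective as `ι_X + f₀ + t·P_u` with `P_u x = ∑ᵢ max 0 (gᵢ x + uᵢ)`.
For the liminf inequality, `ι_X + f₀ + t·P_u` is bounded below by `f₀ + t·P_u`: at a feasible
point this is at least `f₀`, which is continuous, while if some `gⱼ x > 0` then eventually
`gⱼ xᵛ + uⱼᵛ` stays above a positive constant and `t → ∞` drives the penalty to `∞`; points
outside the closed set `X` have a neighbourhood where the objective is `⊤`. For the limsup
inequality take the constant sequence: at a feasible point each term of `P_u x` is at most
`max 0 (maxᵢ uᵢ)`, so `t·P_u x → 0` by the rate assumption.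
-/

section Penalty

variable {α E ι : Type*} [Fintype ι]

def penalty (g : ι → E → ℝ) (u : ι → ℝ) (x : E) : ℝ := ∑ i, max 0 (g i x + u i)

noncomputable def constrainedObjective (X : Set E) (f₀ : E → ℝ) (g : ι → E → ℝ) (x : E) : EReal :=
  if x ∈ X ∧ ∀ i, g i x ≤ 0 then (f₀ x : EReal) else ⊤

noncomputable def penalizedObjective (X : Set E) (f₀ : E → ℝ) (g : ι → E → ℝ) (t : ℝ) (u : ι → ℝ)
    (x : E) : EReal :=
  if x ∈ X then ((f₀ x + t * penalty g u x : ℝ) : EReal) else ⊤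

lemma penalty_nonneg (g : ι → E → ℝ) (u : ι → ℝ) (x : E) : 0 ≤ penalty g u x :=
  Finset.sum_nonneg fun _ _ => le_max_left _ _

lemma max_zero_le_penalty (g : ι → E → ℝ) (u : ι → ℝ) (x : E) (j : ι) :
    max 0 (g j x + u j) ≤ penalty g u x :=
  Finset.single_le_sum (f := fun i => max 0 (g i x + u i)) (fun _ _ => le_max_left _ _)
    (Finset.mem_univ j)

lemma penalty_le_card_mul {g : ι → E → ℝ} {x : E} (hx : ∀ i, g i x ≤ 0) (u : ι → ℝ) :
    penalty g u x ≤ Fintype.card ι * max 0 (⨆ i, u i) := by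
  calc penalty g u x ≤ ∑ _i : ι, max 0 (⨆ i, u i) :=
        Finset.sum_le_sum fun i _ => max_le_max le_rfl <|
          (add_le_of_nonpos_left (hx i)).trans (le_ciSup (Finite.bddAbove_range u) i)
    _ = Fintype.card ι * max 0 (⨆ i, u i) := by
        rw [Finset.sum_const, Finset.card_univ, nsmul_eq_mul]

lemma coe_le_penalizedObjective (X : Set E) (f₀ : E → ℝ) (g : ι → E → ℝ) (t : ℝ)
    (u : ι → ℝ) (x : E) :
    ((f₀ x + t * penalty g u x : ℝ) : EReal) ≤ penalizedObjective X f₀ g t u x := by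
  unfold penalizedObjective
  split_ifs
  exacts [le_rfl, le_top]

lemma le_liminf_of_tendsto_of_le {l : Filter α} [l.NeBot] {a b : α → EReal} {L : EReal}
    (ha : Tendsto a l (𝓝 L)) (hab : ∀ᶠ ν in l, a ν ≤ b ν) : L ≤ liminf b l :=
  ha.liminf_eq ▸ liminf_le_liminf hab

lemma tendsto_mul_penalty_zero {l : Filter α} {g : ι → E → ℝ} {t : α → ℝ} {u : α → ι → ℝ}
    {x : E} (hx : ∀ i, g i x ≤ 0) (ht : ∀ ν, 0 ≤ t ν)
    (hrate : Tendsto (fun ν => t ν * max 0 (⨆ i, u ν i)) l (𝓝 0)) :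
    Tendsto (fun ν => t ν * penalty g (u ν) x) l (𝓝 0) := by
  have hupper : Tendsto (fun ν => Fintype.card ι * (t ν * max 0 (⨆ i, u ν i))) l (𝓝 0) := by
    simpa using hrate.const_mul (Fintype.card ι : ℝ)
  refine tendsto_of_tendsto_of_tendsto_of_le_of_le tendsto_const_nhds hupper
    (fun ν => mul_nonneg (ht ν) (penalty_nonneg g (u ν) x)) (fun ν => ?_)
  calc t ν * penalty g (u ν) x ≤ t ν * (Fintype.card ι * max 0 (⨆ i, u ν i)) :=
        mul_le_mul_of_nonneg_left (penalty_le_card_mul hx (u ν)) (ht ν)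
    _ = Fintype.card ι * (t ν * max 0 (⨆ i, u ν i)) := by ring

theorem limsup_penalizedObjective_le_constrainedObjective {l : Filter α} [l.NeBot]
    (X : Set E) (f₀ : E → ℝ) (g : ι → E → ℝ) {t : α → ℝ} {u : α → ι → ℝ}
    (ht : ∀ ν, 0 ≤ t ν) (hrate : Tendsto (fun ν => t ν * max 0 (⨆ i, u ν i)) l (𝓝 0))
    (x : E) :
    limsup (fun ν => penalizedObjective X f₀ g (t ν) (u ν) x) l ≤
      constrainedObjective X f₀ g x := by
  unfold constrainedObjective
  split_ifs with hfeas
  · have hlim := EReal.tendsto_coe.2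
      ((tendsto_mul_penalty_zero (g := g) hfeas.2 ht hrate).const_add (f₀ x))
    rw [add_zero] at hlim
    refine (hlim.congr fun ν => ?_).limsup_eq.le
    simp [penalizedObjective, hfeas.1]
  · exact le_top

variable [TopologicalSpace E]

lemma tendsto_mul_penalty_atTop {l : Filter α} {g : ι → E → ℝ} {t : α → ℝ} {u : α → ι → ℝ}
    {y : α → E} {x : E} {j : ι} (hgj : ContinuousAt (g j) x) (hj : 0 < g j x)
    (ht : ∀ ν, 0 ≤ t ν) (ht_top : Tendsto t l atTop) (hu : Tendsto u l (𝓝 0))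
    (hy : Tendsto y l (𝓝 x)) :
    Tendsto (fun ν => t ν * penalty g (u ν) (y ν)) l atTop := by
  have hterm : Tendsto (fun ν => max 0 (g j (y ν) + u ν j)) l (𝓝 (max 0 (g j x + 0))) :=
    tendsto_const_nhds.max ((hgj.tendsto.comp hy).add ((continuous_apply j).tendsto 0 |>.comp hu))
  have hpos : 0 < max 0 (g j x + 0) := lt_max_of_lt_right (by rwa [add_zero])
  refine tendsto_atTop_mono (fun ν => ?_) (ht_top.atTop_mul_pos hpos hterm)
  exact mul_le_mul_of_nonneg_left (max_zero_le_penalty g (u ν) (y ν) j) (ht ν)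

theorem constrainedObjective_le_liminf_penalizedObjective {l : Filter α} [l.NeBot]
    {X : Set E} (hX : IsClosed X) {f₀ : E → ℝ} {g : ι → E → ℝ} {x : E}
    (hf₀ : ContinuousAt f₀ x) (hg : ∀ i, ContinuousAt (g i) x) {t : α → ℝ} {u : α → ι → ℝ}
    (ht : ∀ ν, 0 ≤ t ν) (ht_top : Tendsto t l atTop) (hu : Tendsto u l (𝓝 0))
    {y : α → E} (hy : Tendsto y l (𝓝 x)) :
    constrainedObjective X f₀ g x ≤
      liminf (fun ν => penalizedObjective X f₀ g (t ν) (u ν) (y ν)) l := by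
  have hf₀y : Tendsto (fun ν => f₀ (y ν)) l (𝓝 (f₀ x)) := hf₀.tendsto.comp hy
  unfold constrainedObjective
  split_ifs with hfeas
  · refine le_liminf_of_tendsto_of_le (EReal.tendsto_coe.2 hf₀y) (Eventually.of_forall fun ν => ?_)
    refine le_trans ?_ (coe_le_penalizedObjective X f₀ g (t ν) (u ν) (y ν))
    exact EReal.coe_le_coe_iff.2 <| le_add_of_nonneg_right <|
      mul_nonneg (ht ν) (penalty_nonneg g (u ν) (y ν))
  by_cases hxX : x ∈ X
  · obtain ⟨j, hj⟩ : ∃ j, 0 < g j x := by simpa [hxX] using hfeas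
    have hpen := tendsto_mul_penalty_atTop (hg j) hj ht ht_top hu hy
    exact le_liminf_of_tendsto_of_le (EReal.tendsto_coe_atTop.comp (hf₀y.add_atTop hpen))
      (Eventually.of_forall fun ν => coe_le_penalizedObjective X f₀ g (t ν) (u ν) (y ν))
  · refine le_liminf_of_tendsto_of_le tendsto_const_nhds ?_
    filter_upwards [hy.eventually_mem (hX.isOpen_compl.mem_nhds hxX)] with ν hν
    simp [penalizedObjective, show y ν ∉ X from hν]

end Penalty

theorem stmt_9_general {n m : ℕ} (X : Set (Fin n → ℝ)) (hXcl : IsClosed X)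
    (f₀ : (Fin n → ℝ) → ℝ) (hf₀ : Continuous f₀)
    (g : Fin m → (Fin n → ℝ) → ℝ) (hg : ∀ i, Continuous (g i))
    (φ : (Fin n → ℝ) → EReal)
    (hφ : ∀ x, φ x = (if x ∈ X then (0 : EReal) else ⊤) + ((f₀ x : ℝ) : EReal)
      + (if ∀ i, g i x ≤ 0 then (0 : EReal) else ⊤))
    (θ : (Fin m → ℝ) → ℝ) (hθpos : ∀ u, 0 ≤ θ u)
    (f : (Fin m → ℝ) → (Fin n → ℝ) → EReal)
    (hf : ∀ u x, f u x = (if x ∈ X then (0 : EReal) else ⊤) + ((f₀ x : ℝ) : EReal)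
      + ((θ u * ∑ i, max 0 (g i x + u i) : ℝ) : EReal))
    (uν : ℕ → Fin m → ℝ) (hu : Tendsto uν atTop (𝓝 0))
    (hθtop : Tendsto (fun ν => θ (uν ν)) atTop atTop)
    (hrate : Tendsto (fun ν => θ (uν ν) * max 0 (⨆ i, uν ν i)) atTop (𝓝 0)) :
    (∀ (x : Fin n → ℝ) (xν : ℕ → Fin n → ℝ), Tendsto xν atTop (𝓝 x) →
      φ x ≤ liminf (fun ν => f (uν ν) (xν ν)) atTop) ∧
    (∀ x : Fin n → ℝ, ∃ xν : ℕ → Fin n → ℝ, Tendsto xν atTop (𝓝 x) ∧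
      limsup (fun ν => f (uν ν) (xν ν)) atTop ≤ φ x) := by
  have hf' : ∀ u x, f u x = penalizedObjective X f₀ g (θ u) u x := by
    intro u x
    by_cases hx : x ∈ X
    · simp [hf, penalizedObjective, penalty, hx]
    · simp only [hf, penalizedObjective, hx, if_false, EReal.top_add_coe]
  have hφ' : ∀ x, φ x = constrainedObjective X f₀ g x := by
    intro x
    by_cases hx : x ∈ X <;> by_cases hgx : ∀ i, g i x ≤ 0 <;>
      simp [hφ, constrainedObjective, hx, hgx]
  simp only [hf', hφ']
  exact ⟨fun x xν hxν => constrainedObjective_le_liminf_penalizedObjective hXcl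
      hf₀.continuousAt (fun i => (hg i).continuousAt) (fun _ => hθpos _) hθtop hu hxν,
    fun x => ⟨fun _ => x, tendsto_const_nhds,
      limsup_penalizedObjective_le_constrainedObjective X f₀ g (fun _ => hθpos _) hrate x⟩⟩

theorem stmt_9 {n m : ℕ} (X : Set (Fin n → ℝ)) (hXne : X.Nonempty) (hXcl : IsClosed X)
    (f₀ : (Fin n → ℝ) → ℝ) (hf₀ : Continuous f₀)
    (g : Fin m → (Fin n → ℝ) → ℝ) (hg : ∀ i, Continuous (g i))
    (φ : (Fin n → ℝ) → EReal)
    (hφ : ∀ x, φ x = (if x ∈ X then (0 : EReal) else ⊤) + ((f₀ x : ℝ) : EReal)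
      + (if ∀ i, g i x ≤ 0 then (0 : EReal) else ⊤))
    (θ : (Fin m → ℝ) → ℝ) (hθpos : ∀ u, 0 ≤ θ u)
    (f : (Fin m → ℝ) → (Fin n → ℝ) → EReal)
    (hf : ∀ u x, f u x = (if x ∈ X then (0 : EReal) else ⊤) + ((f₀ x : ℝ) : EReal)
      + ((θ u * ∑ i, max 0 (g i x + u i) : ℝ) : EReal))
    (uν : ℕ → Fin m → ℝ) (hu : Tendsto uν atTop (𝓝 0))
    (hθtop : Tendsto (fun ν => θ (uν ν)) atTop atTop)
    (hrate : Tendsto (fun ν => θ (uν ν) * max 0 (⨆ i, uν ν i)) atTop (𝓝 0)) :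
    (∀ (x : Fin n → ℝ) (xν : ℕ → Fin n → ℝ), Tendsto xν atTop (𝓝 x) →
      φ x ≤ liminf (fun ν => f (uν ν) (xν ν)) atTop) ∧
    (∀ x : Fin n → ℝ, ∃ xν : ℕ → Fin n → ℝ, Tendsto xν atTop (𝓝 x) ∧
      limsup (fun ν => f (uν ν) (xν ν)) atTop ≤ φ x) :=
  stmt_9_general X hXcl f₀ hf₀ g hg φ hφ θ hθpos f hf uν hu hθtop hrate
end
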